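/- arXiv:1403.7383 — 2 statements merged into one kernel-verified Lean document; each statement's English description precedes it below -/
import Mathlib

section
/- Let Q_•, P_•, F_• be chain complexes of R-modules with Q_j = P_j = F_j = 0 for j < 0, each acyclic (exact in every degree ≠ 0), and let σ_• : Q_• → P_• and τ_• : P_• → F_• be morphisms of complexes such that the induced sequence 0 → coker d^Q_1 → coker d^P_1 →^α coker d^F_1 is exact. Suppose there exists a family of maps ℓ_i : Q_i → F_{i+1} satisfying d^F_{i+1} ∘ ℓ_i + ℓ_{i−1} ∘ d^Q_i = τ_i ∘ σ_i for all integers i. Then the complex Q_• ⊕ P_•[1] ⊕ F_•[2], with i-th term Q_i ⊕ P_{i+1} ⊕ F_{i+2} and differential d^i(q, p, f) = (d^Q_i(q), σ_i(q) − d^P_{i+1}(p), ℓ_i(q) − τ_{i+1}(p) + d^F_{i+2}(f)), is exact in every degree i ≠ −2, and the cokernel of its differential d^{−1} : Q_{−1} ⊕ P_0 ⊕ F_1 → F_0 is isomorphic to coker α. -/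
/-- Lemma 3.1. Given acyclic chain complexes `Q, P, F` of `R`-modules
vanishing in negative degrees, chain maps `σ : Q → P`, `τ : P → F` such that
`0 → coker d^Q_1 → coker d^P_1 → coker d^F_1` is exact, and maps `ℓ_i : Q_i → F_{i+1}`
with `d^F_{i+1} ∘ ℓ_i + ℓ_{i-1} ∘ d^Q_i = τ_i ∘ σ_i` for all `i`, the total complex
`Q ⊕ P[1] ⊕ F[2]` with differential
`d(q, p, f) = (d^Q q, σ q - d^P p, ℓ q - τ p + d^F f)` is exact in every degree `≠ -2`,
and the cokernel of its differential into degree `-2` is isomorphic to `coker α`.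

Convention: the differential `dQ i : Q (i+1) →ₗ[R] Q i` is the paper's
`d^Q_{i+1} : Q_{i+1} → Q_i`. -/
theorem statement_0
    (R : Type) [CommRing R]
    (Q P F : ℤ → Type)
    [∀ i, AddCommGroup (Q i)] [∀ i, Module R (Q i)]
    [∀ i, AddCommGroup (P i)] [∀ i, Module R (P i)]
    [∀ i, AddCommGroup (F i)] [∀ i, Module R (F i)]
    (dQ : ∀ i : ℤ, Q (i + 1) →ₗ[R] Q i)
    (dP : ∀ i : ℤ, P (i + 1) →ₗ[R] P i)
    (dF : ∀ i : ℤ, F (i + 1) →ₗ[R] F i)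
    (hQneg : ∀ j : ℤ, j < 0 → Subsingleton (Q j))
    (hPneg : ∀ j : ℤ, j < 0 → Subsingleton (P j))
    (hFneg : ∀ j : ℤ, j < 0 → Subsingleton (F j))
    (hQc : ∀ i : ℤ, (dQ i).comp (dQ (i + 1)) = 0)
    (hPc : ∀ i : ℤ, (dP i).comp (dP (i + 1)) = 0)
    (hFc : ∀ i : ℤ, (dF i).comp (dF (i + 1)) = 0)
    (hQex : ∀ i : ℤ, i + 1 ≠ 0 → Function.Exact (dQ (i + 1)) (dQ i))
    (hPex : ∀ i : ℤ, i + 1 ≠ 0 → Function.Exact (dP (i + 1)) (dP i))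
    (hFex : ∀ i : ℤ, i + 1 ≠ 0 → Function.Exact (dF (i + 1)) (dF i))
    (σ : ∀ i : ℤ, Q i →ₗ[R] P i) (τ : ∀ i : ℤ, P i →ₗ[R] F i)
    (hσ : ∀ i : ℤ, (σ i).comp (dQ i) = (dP i).comp (σ (i + 1)))
    (hτ : ∀ i : ℤ, (τ i).comp (dP i) = (dF i).comp (τ (i + 1)))
    (β : (Q 0 ⧸ LinearMap.range (dQ 0)) →ₗ[R] (P 0 ⧸ LinearMap.range (dP 0)))
    (hβ : β.comp (LinearMap.range (dQ 0)).mkQ = ((LinearMap.range (dP 0)).mkQ).comp (σ 0))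
    (α : (P 0 ⧸ LinearMap.range (dP 0)) →ₗ[R] (F 0 ⧸ LinearMap.range (dF 0)))
    (hα : α.comp (LinearMap.range (dP 0)).mkQ = ((LinearMap.range (dF 0)).mkQ).comp (τ 0))
    (hβinj : Function.Injective β)
    (hβα : Function.Exact β α)
    (ℓ : ∀ i : ℤ, Q i →ₗ[R] F (i + 1))
    (hℓ : ∀ i : ℤ, (dF (i + 1)).comp (ℓ (i + 1)) + (ℓ i).comp (dQ i)
      = (τ (i + 1)).comp (σ (i + 1))) :
    ∀ dT : ∀ i : ℤ, (Q (i + 1) × P (i + 1 + 1) × F (i + 1 + 1 + 1)) →ₗ[R]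
        (Q i × P (i + 1) × F (i + 1 + 1)),
      (∀ (i : ℤ) (x : Q (i + 1) × P (i + 1 + 1) × F (i + 1 + 1 + 1)),
        dT i x = (dQ i x.1, σ (i + 1) x.1 - dP (i + 1) x.2.1,
          ℓ (i + 1) x.1 - τ (i + 1 + 1) x.2.1 + dF (i + 1 + 1) x.2.2)) →
      (∀ i : ℤ, i + 1 ≠ -2 → Function.Exact (dT (i + 1)) (dT i)) ∧
      Nonempty (((Q (-2) × P (-2 + 1) × F (-2 + 1 + 1)) ⧸ LinearMap.range (dT (-2)))
        ≃ₗ[R] ((F 0 ⧸ LinearMap.range (dF 0)) ⧸ LinearMap.range α)) := by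
  intro dT hdT
  -- pointwise versions of the compatibility equations
  have hσ' : ∀ (i : ℤ) (x : Q (i+1)), σ i (dQ i x) = dP i (σ (i+1) x) := by
    intro i x; simpa using LinearMap.congr_fun (hσ i) x
  have hτ' : ∀ (i : ℤ) (x : P (i+1)), τ i (dP i x) = dF i (τ (i+1) x) := by
    intro i x; simpa using LinearMap.congr_fun (hτ i) x
  have hℓ' : ∀ (i : ℤ) (x : Q (i+1)),
      dF (i+1) (ℓ (i+1) x) + ℓ i (dQ i x) = τ (i+1) (σ (i+1) x) := by
    intro i x; simpa using LinearMap.congr_fun (hℓ i) x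
  have hQc' : ∀ (i : ℤ) (x : Q (i+1+1)), dQ i (dQ (i+1) x) = 0 := by
    intro i x; simpa using LinearMap.congr_fun (hQc i) x
  have hPc' : ∀ (i : ℤ) (x : P (i+1+1)), dP i (dP (i+1) x) = 0 := by
    intro i x; simpa using LinearMap.congr_fun (hPc i) x
  have hFc' : ∀ (i : ℤ) (x : F (i+1+1)), dF i (dF (i+1) x) = 0 := by
    intro i x; simpa using LinearMap.congr_fun (hFc i) x
  constructor
  · intro i hi
    intro x
    obtain ⟨q, p, f⟩ := x
    constructor
    · -- kernel ⊆ range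
      intro hx
      rw [hdT] at hx
      simp only [Prod.mk_eq_zero] at hx
      obtain ⟨h1, h2, h3⟩ := hx
      -- shared steps
      have keyP : ∀ q' : Q (i+1+1), dQ (i+1) q' = q →
          dP (i+1) (σ (i+1+1) q' - p) = 0 := by
        intro q' hq'
        rw [map_sub, ← hσ' (i+1) q', hq']
        exact h2
      have keyF : ∀ (q' : Q (i+1+1)) (p' : P (i+1+1+1)), dQ (i+1) q' = q →
          dP (i+1+1) p' = σ (i+1+1) q' - p →
          dF (i+1+1) (f - ℓ (i+1+1) q' + τ (i+1+1+1) p') = 0 := by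
        intro q' p' hq' hp'
        have e0 : dF (i+1+1) (ℓ (i+1+1) q') + ℓ (i+1) q = τ (i+1+1) (σ (i+1+1) q') := by
          have h := hℓ' (i+1) q'; rwa [hq'] at h
        have e1 : dF (i+1+1) (τ (i+1+1+1) p') = τ (i+1+1) (σ (i+1+1) q') - τ (i+1+1) p := by
          rw [← hτ' (i+1+1) p', hp', map_sub]
        have e2 : dF (i+1+1) f = τ (i+1+1) p - ℓ (i+1) q := by
          rw [← neg_eq_of_add_eq_zero_right h3, neg_sub]
        rw [map_add, map_sub, e2, e1, ← e0]
        abel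
      have final : ∀ (q' : Q (i+1+1)) (p' : P (i+1+1+1)) (f' : F (i+1+1+1+1)),
          dQ (i+1) q' = q → dP (i+1+1) p' = σ (i+1+1) q' - p →
          dF (i+1+1+1) f' = f - ℓ (i+1+1) q' + τ (i+1+1+1) p' →
          (q, p, f) ∈ Set.range (dT (i+1)) := by
        intro q' p' f' hq' hp' hf'
        refine ⟨(q', p', f'), ?_⟩
        rw [hdT]
        show (dQ (i+1) q', σ (i+1+1) q' - dP (i+1+1) p',
          ℓ (i+1+1) q' - τ (i+1+1+1) p' + dF (i+1+1+1) f') = (q, p, f)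
        simp only [Prod.mk.injEq]
        refine ⟨hq', by rw [hp']; abel, by rw [hf']; abel⟩
      have hcase : 0 ≤ i ∨ i = -1 ∨ i = -2 ∨ i ≤ -4 := by omega
      rcases hcase with hc | hc | hc | hc
      · -- generic positive degrees
        obtain ⟨q', hq'⟩ := (hQex i (by omega) q).mp h1
        obtain ⟨p', hp'⟩ := (hPex (i+1) (by omega) _).mp (keyP q' hq')
        obtain ⟨f', hf'⟩ := (hFex (i+1+1) (by omega) _).mp (keyF q' p' hq' hp')
        exact final q' p' f' hq' hp' hf'
      · -- i = -1 : use injectivity of β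
        subst hc
        have e : β ((LinearMap.range (dQ 0)).mkQ q) = (LinearMap.range (dP 0)).mkQ (σ 0 q) := by
          simpa using LinearMap.congr_fun hβ q
        have h2' : σ 0 q = dP 0 p := sub_eq_zero.mp h2
        have hb0 : β ((LinearMap.range (dQ 0)).mkQ q) = 0 := by
          rw [e, h2', Submodule.mkQ_apply, Submodule.Quotient.mk_eq_zero]
          exact ⟨p, rfl⟩
        have hq0 : (LinearMap.range (dQ 0)).mkQ q = 0 :=
          hβinj (hb0.trans (map_zero β).symm)
        rw [Submodule.mkQ_apply, Submodule.Quotient.mk_eq_zero] at hq0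
        obtain ⟨q', hq'⟩ := hq0
        have hq'' : dQ (-1+1) q' = q := hq'
        obtain ⟨p', hp'⟩ := (hPex (-1+1) (by norm_num) _).mp (keyP q' hq'')
        obtain ⟨f', hf'⟩ := (hFex (-1+1+1) (by norm_num) _).mp (keyF q' p' hq'' hp')
        exact final q' p' f' hq'' hp' hf'
      · -- i = -2 : use exactness of (β, α)
        subst hc
        haveI : Subsingleton (Q (-2+1)) := hQneg _ (by norm_num)
        have hq0 : q = 0 := Subsingleton.elim q 0
        have h3' : τ (-2+1+1) p = dF (-2+1+1) f := by
          have h := h3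
          rw [hq0, map_zero, zero_sub] at h
          exact neg_add_eq_zero.mp h
        have eα : α ((LinearMap.range (dP 0)).mkQ p)
            = (LinearMap.range (dF 0)).mkQ (τ (-2+1+1) p) := by
          simpa using LinearMap.congr_fun hα p
        have ha0 : α ((LinearMap.range (dP 0)).mkQ p) = 0 := by
          rw [eα, h3', Submodule.mkQ_apply, Submodule.Quotient.mk_eq_zero]
          exact ⟨f, rfl⟩
        obtain ⟨z, hz⟩ := (hβα _).mp ha0
        obtain ⟨q', hq'z⟩ := Submodule.mkQ_surjective _ z
        have eβ : β ((LinearMap.range (dQ 0)).mkQ q')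
            = (LinearMap.range (dP 0)).mkQ (σ (-2+1+1) q') := by
          simpa using LinearMap.congr_fun hβ q'
        have hmem : σ (-2+1+1) q' - p ∈ LinearMap.range (dP (-2+1+1)) := by
          have e2 : ((LinearMap.range (dP 0)).mkQ) (σ (-2+1+1) q' - p) = 0 := by
            rw [map_sub, ← eβ, hq'z, hz, sub_self]
          have e3 : σ (-2+1+1) q' - p ∈ LinearMap.range (dP 0) := by
            rwa [Submodule.mkQ_apply, Submodule.Quotient.mk_eq_zero] at e2
          exact e3
        obtain ⟨p', hp'⟩ := hmem
        have hq' : dQ (-2+1) q' = q := Subsingleton.elim _ q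
        obtain ⟨f', hf'⟩ := (hFex (-2+1+1) (by norm_num) _).mp (keyF q' p' hq' hp')
        exact final q' p' f' hq' hp' hf'
      · -- very negative degrees: everything is zero
        haveI : Subsingleton (Q (i+1)) := hQneg _ (by omega)
        haveI : Subsingleton (P (i+1+1)) := hPneg _ (by omega)
        haveI : Subsingleton (F (i+1+1+1)) := hFneg _ (by omega)
        exact ⟨0, Subsingleton.elim _ _⟩
    · -- range ⊆ kernel : d ∘ d = 0
      rintro ⟨⟨q', p', f'⟩, hy⟩
      rw [← hy, hdT, hdT]
      show (dQ i (dQ (i+1) q'),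
        σ (i+1) (dQ (i+1) q') - dP (i+1) (σ (i+1+1) q' - dP (i+1+1) p'),
        ℓ (i+1) (dQ (i+1) q') - τ (i+1+1) (σ (i+1+1) q' - dP (i+1+1) p')
          + dF (i+1+1) (ℓ (i+1+1) q' - τ (i+1+1+1) p' + dF (i+1+1+1) f')) = 0
      simp only [Prod.mk_eq_zero]
      refine ⟨hQc' i q', ?_, ?_⟩
      · rw [map_sub, hσ' (i+1) q', hPc' (i+1) p']
        abel
      · rw [map_sub, map_add, map_sub, hτ' (i+1+1) p', hFc' (i+1+1) f',
          ← hℓ' (i+1) q']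
        abel
  · -- the cokernel computation
    haveI : Subsingleton (Q (-2)) := hQneg _ (by norm_num)
    haveI : Subsingleton (P (-2+1)) := hPneg _ (by norm_num)
    haveI : Subsingleton (Q (-2+1)) := hQneg _ (by norm_num)
    let π3 : (Q (-2) × P (-2+1) × F (-2+1+1)) →ₗ[R] F 0 :=
      (LinearMap.snd R (P (-2+1)) (F (-2+1+1))).comp
        (LinearMap.snd R (Q (-2)) (P (-2+1) × F (-2+1+1)))
    let φ : (Q (-2) × P (-2+1) × F (-2+1+1)) →ₗ[R]
        ((F 0 ⧸ LinearMap.range (dF 0)) ⧸ LinearMap.range α) :=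
      (LinearMap.range α).mkQ.comp (((LinearMap.range (dF 0)).mkQ).comp π3)
    have hsurj : Function.Surjective φ := by
      intro y
      obtain ⟨y1, rfl⟩ := Submodule.mkQ_surjective _ y
      obtain ⟨f0, rfl⟩ := Submodule.mkQ_surjective _ y1
      exact ⟨(0, 0, f0), rfl⟩
    have hker : LinearMap.range (dT (-2)) = LinearMap.ker φ := by
      apply le_antisymm
      · rintro x ⟨⟨q, p, f⟩, rfl⟩
        have hq0 : q = (0 : Q (-2+1)) := Subsingleton.elim _ _
        rw [LinearMap.mem_ker, hdT]
        show (LinearMap.range α).mkQ ((LinearMap.range (dF 0)).mkQ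
            (ℓ (-2+1) q - τ (-2+1+1) p + dF (-2+1+1) f)) = 0
        rw [hq0, map_zero, zero_sub, map_add, map_neg, map_add, map_neg]
        have eA : (LinearMap.range (dF 0)).mkQ (dF (-2+1+1) f) = 0 := by
          rw [Submodule.mkQ_apply, Submodule.Quotient.mk_eq_zero]
          exact ⟨f, rfl⟩
        have eB : (LinearMap.range α).mkQ ((LinearMap.range (dF 0)).mkQ (τ (-2+1+1) p)) = 0 := by
          have eα : α ((LinearMap.range (dP 0)).mkQ p)
              = (LinearMap.range (dF 0)).mkQ (τ (-2+1+1) p) := LinearMap.congr_fun hα p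
          rw [← eα, Submodule.mkQ_apply, Submodule.Quotient.mk_eq_zero]
          exact ⟨_, rfl⟩
        rw [eA, eB, map_zero, neg_zero, add_zero]
      · intro x hx
        rw [LinearMap.mem_ker] at hx
        have hx0 : (LinearMap.range α).mkQ ((LinearMap.range (dF 0)).mkQ (π3 x)) = 0 := hx
        have hx' : (LinearMap.range (dF 0)).mkQ (π3 x) ∈ LinearMap.range α :=
          (Submodule.Quotient.mk_eq_zero _).mp hx0
        obtain ⟨u, hu⟩ := hx'
        obtain ⟨p0, rfl⟩ := Submodule.mkQ_surjective _ u
        have hu' : (LinearMap.range (dF 0)).mkQ (τ 0 p0)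
            = (LinearMap.range (dF 0)).mkQ (π3 x) := by
          have eα : α ((LinearMap.range (dP 0)).mkQ p0)
              = (LinearMap.range (dF 0)).mkQ (τ 0 p0) := by
            simpa using LinearMap.congr_fun hα p0
          rw [← eα]; exact hu
        have hmem : π3 x - τ 0 p0 ∈ LinearMap.range (dF 0) := by
          rw [← Submodule.Quotient.mk_eq_zero, ← Submodule.mkQ_apply, map_sub, hu', sub_self]
        obtain ⟨f1, hf1⟩ := hmem
        obtain ⟨a, b, f0⟩ := x
        refine ⟨((0 : Q (-2+1)), -p0, f1), ?_⟩
        rw [hdT]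
        show (dQ (-2) 0, σ (-2+1) 0 - dP (-2+1) (-p0),
          ℓ (-2+1) 0 - τ (-2+1+1) (-p0) + dF (-2+1+1) f1) = (a, b, f0)
        simp only [Prod.mk.injEq]
        refine ⟨Subsingleton.elim _ _, Subsingleton.elim _ _, ?_⟩
        have hf1' : dF (-2+1+1) f1 = f0 - τ (-2+1+1) p0 := hf1
        rw [map_zero, zero_sub, map_neg, neg_neg, hf1']
        abel
    exact ⟨(Submodule.quotEquivOfEq _ _ hker).trans (φ.quotKerEquivOfSurjective hsurj)⟩
end

section
/- Let I ⊂ R = K[x_0,…,x_n] be a homogeneous ideal with grade(I) ≥ 2 (i.e. I contains an R-regular sequence of length 2), set A = R/I, and suppose a minimal graded free presentation of I has the form ⊕_j R(−n_{2j}) → ⊕_i R(−n_{1i}) → I → 0 with max_j{n_{2j}} < 2·min_i{n_{1i}}. Then the natural map R → Hom_R(I, I) is an isomorphism, and the K-vector space of degree-preserving A-linear endomorphisms of the conormal module I/I² is one-dimensional: ₀Hom_A(I/I², I/I²) ≅ K, i.e. every A-linear map I/I² → I/I² carrying each graded piece into itself is multiplication by a scalar of K. -/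
/-!
Common setup: standard determinantal rings.  `𝒜` is a `t × (t+c-1)` homogeneous polynomial
matrix over `R = K[x_0, …, x_n]`, representing a graded morphism
`φ : F = ⊕ R(-a_j) → G = ⊕ R(-b_i)`; `I = I_t(𝒜)`, `A = R/I`, `J = I_{t-1}(𝒜)`,
`M = coker φ`, and `S_iM` denotes symmetric powers of `M` (with `S_0M = A` and
`S_{-1}M = Hom_A(M, A) = Hom_R(M, A)`).
-/

open scoped TensorProduct
open CategoryTheory

/-- The polynomial ring `K[x_0, …, x_n]`. -/
abbrev PolyR (K : Type) [CommRing K] (n : ℕ) : Type := MvPolynomial (Fin (n + 1)) K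

/-- The irrelevant maximal ideal `m = (x_0, …, x_n)`. -/
noncomputable def mxIdeal (K : Type) [CommRing K] (n : ℕ) : Ideal (PolyR K n) :=
  Ideal.span (Set.range MvPolynomial.X)

/-- The ideal generated by the `k × k` minors of a matrix. -/
noncomputable def minorsIdeal {R : Type} [CommRing R] {m n : ℕ} (k : ℕ)
    (A : Matrix (Fin m) (Fin n) R) : Ideal R :=
  Ideal.span {d : R | ∃ (r : Fin k → Fin m) (c : Fin k → Fin n), d = (A.submatrix r c).det}

/-- `p` is homogeneous of (integer) degree `d`; for `d < 0` this forces `p = 0`. -/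
def IsHomOfDeg {σ K : Type} [CommSemiring K] (p : MvPolynomial σ K) (d : ℤ) : Prop :=
  ∀ u : σ →₀ ℕ, MvPolynomial.coeff u p ≠ 0 → ((u.sum fun _ e => e : ℕ) : ℤ) = d

/-- `depth_J M`: the supremum of lengths of `M`-regular sequences of elements of `J`. -/
noncomputable def depth {R : Type} [CommRing R] (J : Ideal R) (M : Type) [AddCommGroup M]
    [Module R M] : ℕ∞ :=
  sSup {d : ℕ∞ | ∃ rs : List R, (rs.length : ℕ∞) = d ∧ (∀ r ∈ rs, r ∈ J) ∧
    RingTheory.Sequence.IsRegular M rs}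

/-- The `i`-th symmetric power of a module: the coinvariants of the permutation action
on the `i`-th tensor power. -/
abbrev SymPow (R : Type) [CommRing R] (M : Type) [AddCommGroup M] [Module R M] (i : ℕ) : Type :=
  (⨂[R]^i M) ⧸ (Submodule.span R {x : ⨂[R]^i M | ∃ (σ : Equiv.Perm (Fin i)) (y : ⨂[R]^i M),
      x = y - (PiTensorProduct.reindex R (fun _ => M) σ) y})

/-- The cokernel `M` of the map `φ : F → G` given by the matrix `𝒜`. -/
abbrev CokM {K : Type} [CommRing K] {n t s : ℕ} (𝒜 : Matrix (Fin t) (Fin s) (PolyR K n)) :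
    Type :=
  (Fin t → PolyR K n) ⧸ LinearMap.range (Matrix.mulVecLin 𝒜)

/-- `S_iM` for `i : ℤ`, where `S_0M := A = R/I_t(𝒜)` and `S_iM := Hom_A(M, A)` for `i < 0`. -/
noncomputable def SM {K : Type} [CommRing K] {n t s : ℕ}
    (𝒜 : Matrix (Fin t) (Fin s) (PolyR K n)) (i : ℤ) : ModuleCat (PolyR K n) :=
  if i < 0 then ModuleCat.of _ (CokM 𝒜 →ₗ[PolyR K n] (PolyR K n ⧸ minorsIdeal t 𝒜))
  else if i = 0 then ModuleCat.of _ (PolyR K n ⧸ minorsIdeal t 𝒜)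
  else ModuleCat.of _ (SymPow (PolyR K n) (CokM 𝒜) i.toNat)

/-- `Ext_R^i(M, N)`, as an `R`-module. -/
noncomputable def ExtMod (R : Type) [CommRing R] (M N : ModuleCat R) (i : ℕ) : ModuleCat R :=
  ((Ext R (ModuleCat R) i).obj (Opposite.op M)).obj N

/-- `pd_R N ≤ k`, expressed through the vanishing of `Ext_R^j(N, -)` for all `j > k`. -/
def projDimLE (R : Type) [CommRing R] (N : ModuleCat R) (k : ℕ) : Prop :=
  ∀ (L : ModuleCat R) (j : ℕ), k < j → Subsingleton (ExtMod R N L j)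

/-!
If `r, s ∈ I` is a regular sequence, an endomorphism `φ` of `I` satisfies `r φ(s) = s φ(r)`,
so `r ∣ φ(r)` and `φ` is multiplication by `φ(r) / r`; hence `R ≅ Hom_R(I, I)`.

For a degree-preserving `f` on `I/I²`, lift `f(gᵢ)` to homogeneous `yᵢ ∈ I` of degree `n1 i`.
For each relation column `j` of `B`, the element `∑ᵢ Bᵢⱼ yᵢ` lies in `I²` and is homogeneous of
degree `n2 j < 2 min n1`, below the initial degree of `I²`, so it vanishes. Thus `gᵢ ↦ yᵢ`
extends to an endomorphism of `I`, i.e. `yᵢ = c gᵢ` for some `c ∈ R`, and comparing components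
of degree `n1 i` gives `yᵢ = c(0) gᵢ`: `f` is multiplication by the constant term of `c`.
-/

open MvPolynomial Matrix RingTheory.Sequence

section IsHomOfDeg

variable {σ R : Type} [CommSemiring R]

theorem isHomOfDeg_natCast_iff {p : MvPolynomial σ R} {d : ℕ} :
    IsHomOfDeg p d ↔ p.IsHomogeneous d := by
  have hw (u : σ →₀ ℕ) : Finsupp.weight 1 u = u.degree := by
    rw [Finsupp.degree_eq_weight_one]; rfl
  refine ⟨fun h u hu => ?_, fun h u hu => ?_⟩
  · rw [hw]; exact_mod_cast h u hu
  · have := h hu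
    rw [hw] at this
    exact_mod_cast this

theorem IsHomOfDeg.mul {a b : MvPolynomial σ R} {d e : ℤ} (ha : IsHomOfDeg a d)
    (hb : IsHomOfDeg b e) : IsHomOfDeg (a * b) (d + e) := by
  classical
  intro μ hμ
  rw [coeff_mul] at hμ
  obtain ⟨⟨ν, ρ⟩, hνρ, hne⟩ := Finset.exists_ne_zero_of_sum_ne_zero hμ
  rw [Finset.HasAntidiagonal.mem_antidiagonal] at hνρ
  subst hνρ
  rw [← ha ν (left_ne_zero_of_mul hne), ← hb ρ (right_ne_zero_of_mul hne)]
  exact_mod_cast map_add Finsupp.degree ν ρ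

theorem isHomOfDeg_sum {ι : Type*} (s : Finset ι) {F : ι → MvPolynomial σ R} {d : ℤ}
    (h : ∀ i ∈ s, IsHomOfDeg (F i) d) : IsHomOfDeg (∑ i ∈ s, F i) d := by
  intro μ hμ
  rw [coeff_sum] at hμ
  obtain ⟨i, hi, hne⟩ := Finset.exists_ne_zero_of_sum_ne_zero hμ
  exact h i hi μ hne

end IsHomOfDeg

namespace MvPolynomial

variable {σ R : Type*} [CommSemiring R]

theorem IsHomogeneous.eq_zero_of_mem_pow_idealOfVars {p : MvPolynomial σ R} {d e : ℕ}
    (hp : p.IsHomogeneous d) (hpe : p ∈ idealOfVars σ R ^ e) (hde : d < e) : p = 0 := by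
  ext μ
  rw [coeff_zero]
  by_cases hμ : μ.degree = d
  · exact (mem_pow_idealOfVars_iff' e p).mp hpe μ (hμ ▸ hde)
  · exact hp.coeff_eq_zero hμ

theorem span_le_pow_idealOfVars {ι : Type*} {g : ι → MvPolynomial σ R} {n : ι → ℕ} {m : ℕ}
    (hg : ∀ i, (g i).IsHomogeneous (n i)) (hm : ∀ i, m ≤ n i) :
    Ideal.span (Set.range g) ≤ idealOfVars σ R ^ m := by
  rw [Ideal.span_le]
  rintro _ ⟨i, rfl⟩
  refine (mem_pow_idealOfVars_iff m (g i)).mpr fun μ hμ => ?_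
  by_contra hlt
  exact mem_support_iff.mp hμ ((hg i).coeff_eq_zero fun h => hlt (h ▸ hm i))

theorem IsHomogeneous.eq_zero_of_mem_span_sq {ι : Type*} {g : ι → MvPolynomial σ R} {n : ι → ℕ}
    {z : MvPolynomial σ R} {d : ℕ} (hg : ∀ i, (g i).IsHomogeneous (n i)) (hd : ∀ i, d < 2 * n i)
    (hz : z.IsHomogeneous d) (hzI : z ∈ Ideal.span (Set.range g) ^ 2) : z = 0 := by
  -- `m` is at most every `n i`, and `d < 2 * m`
  set m := d / 2 + 1
  refine hz.eq_zero_of_mem_pow_idealOfVars (e := m * 2) ?_ (by omega)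
  rw [pow_mul]
  exact Ideal.pow_right_mono (span_le_pow_idealOfVars hg fun i => by have := hd i; omega) 2 hzI

theorem homogeneousComponent_mul_of_isHomogeneous {a h : MvPolynomial σ R} {e : ℕ}
    (hh : h.IsHomogeneous e) : homogeneousComponent e (a * h) = C (coeff 0 a) * h := by
  conv_lhs => rw [← sum_homogeneousComponent a, Finset.sum_mul, map_sum]
  rw [Finset.sum_eq_single 0]
  · rw [homogeneousComponent_zero, homogeneousComponent_eq_self]
    simpa using (isHomogeneous_C σ (coeff 0 a)).mul hh
  · intro k _ hk
    rw [homogeneousComponent_of_mem ((mem_homogeneousSubmodule _ _).mpr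
      ((homogeneousComponent_isHomogeneous k a).mul hh)), if_neg (by omega)]
  · simp

end MvPolynomial

namespace Ideal

variable {R : Type*} [CommRing R]

theorem mul_apply_comm {I : Ideal R} (φ : I →ₗ[R] I) (x z : I) :
    (x : R) * φ z = z * φ x := by
  have hxz : (x : R) • z = (z : R) • x := Subtype.ext (mul_comm _ _)
  calc (x : R) * φ z = φ ((x : R) • z) := by simp
    _ = z * φ x := by rw [hxz]; simp

theorem dvd_of_mul_eq_mul_of_isSMulRegular {r s a b : R}
    (hs : IsSMulRegular (QuotSMulTop r R) s) (h : r * a = s * b) : r ∣ b := by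
  have hb : s • (Submodule.Quotient.mk b : QuotSMulTop r R) = s • 0 := by
    rw [smul_zero, ← Submodule.Quotient.mk_smul, Submodule.Quotient.mk_eq_zero,
      Submodule.mem_smul_pointwise_iff_exists]
    exact ⟨a, Submodule.mem_top, h.trans (smul_eq_mul s b).symm⟩
  obtain ⟨c, -, hc⟩ := (Submodule.mem_smul_pointwise_iff_exists _ _ _).mp
    ((Submodule.Quotient.mk_eq_zero _).mp (hs hb))
  exact ⟨c, hc.symm⟩

theorem lsmul_bijective_of_isWeaklyRegular {I : Ideal R} {r s : R} (hr : r ∈ I) (hs : s ∈ I)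
    (hrs : IsWeaklyRegular R [r, s]) : Function.Bijective (LinearMap.lsmul R I) := by
  simp only [isWeaklyRegular_cons_iff] at hrs
  obtain ⟨hr_reg, hs_reg, -⟩ := hrs
  refine ⟨fun c c' hcc' => ?_, fun φ => ?_⟩
  · have := congrArg Subtype.val (LinearMap.congr_fun hcc' ⟨r, hr⟩)
    exact hr_reg (by simpa [mul_comm] using this)
  · obtain ⟨c, hc⟩ := dvd_of_mul_eq_mul_of_isSMulRegular hs_reg (mul_apply_comm φ ⟨r, hr⟩ ⟨s, hs⟩)
    refine ⟨c, LinearMap.ext fun x => Subtype.ext (hr_reg ?_)⟩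
    calc r • (c * x) = x * (r * c) := by simp only [smul_eq_mul]; ring
      _ = r • (φ x : R) := by rw [← hc, mul_apply_comm]; rfl

variable {ι : Type*}

def spanGenerator (g : ι → R) (i : ι) : span (Set.range g) :=
  ⟨g i, subset_span ⟨i, rfl⟩⟩

@[simp]
theorem coe_spanGenerator (g : ι → R) (i : ι) : (spanGenerator g i : R) = g i :=
  rfl

theorem span_range_spanGenerator (g : ι → R) :
    Submodule.span R (Set.range (spanGenerator g)) = ⊤ := by
  convert Submodule.span_span_coe_preimage (R := R) (s := Set.range g)
  ext x
  exact ⟨fun ⟨i, hi⟩ => ⟨i, by rw [← hi]; rfl⟩, fun ⟨i, hi⟩ => ⟨i, Subtype.ext hi⟩⟩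

theorem cotangent_ext_spanGenerator {M : Type*} [AddCommGroup M] [Module R M] {g : ι → R}
    {f f' : (span (Set.range g)).Cotangent →ₗ[R] M}
    (h : ∀ i, f (toCotangent _ (spanGenerator g i)) = f' (toCotangent _ (spanGenerator g i))) :
    f = f' := by
  have := LinearMap.ext_on_range (span_range_spanGenerator g)
    (f := f ∘ₗ toCotangent _) (g := f' ∘ₗ toCotangent _) h
  exact LinearMap.ext fun ξ => by
    obtain ⟨x, rfl⟩ := toCotangent_surjective _ ξ
    exact LinearMap.congr_fun this x

variable [Fintype ι]

theorem exists_eq_mul_of_dotProduct_eq_zero {g y : ι → R} (hy : ∀ i, y i ∈ span (Set.range g))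
    (hsyz : ∀ v, v ⬝ᵥ g = 0 → v ⬝ᵥ y = 0)
    (hsurj : Function.Surjective (LinearMap.lsmul R (span (Set.range g)))) :
    ∃ c, ∀ i, y i = c * g i := by
  classical
  set π := Fintype.linearCombination R (spanGenerator g)
  set Y := Fintype.linearCombination R (fun i => (⟨y i, hy i⟩ : span (Set.range g)))
  have hπ : Function.Surjective π :=
    (span_range_eq_top_iff_surjective_fintypeLinearCombination R _).mp (span_range_spanGenerator g)
  have hker : LinearMap.ker π ≤ LinearMap.ker Y := fun v hv => by
    have hvg : v ⬝ᵥ g = 0 := by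
      simpa [π, Fintype.linearCombination_apply, dotProduct] using congrArg Subtype.val hv
    exact Subtype.ext (by simpa [Y, Fintype.linearCombination_apply, dotProduct] using hsyz v hvg)
  set ψ := (LinearMap.ker π).liftQ Y hker ∘ₗ (π.quotKerEquivOfSurjective hπ).symm.toLinearMap
  have hψ : ∀ v, ψ (π v) = Y v := fun v => by
    simp [ψ, LinearMap.quotKerEquivOfSurjective_symm_apply]
  obtain ⟨c, hc⟩ := hsurj ψ
  refine ⟨c, fun i => ?_⟩
  have := congrArg Subtype.val ((hψ (Pi.single i 1)).symm.trans (LinearMap.congr_fun hc _).symm)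
  simpa [π, Y, Fintype.linearCombination_apply, Pi.single_apply] using this

theorem dotProduct_mem_sq_of_map_toCotangent {I : Ideal R} (f : I.Cotangent →ₗ[R] I.Cotangent)
    {x y : ι → I} (hxy : ∀ i, f (I.toCotangent (x i)) = I.toCotangent (y i)) {v : ι → R}
    (hv : v ⬝ᵥ (fun i => (x i : R)) = 0) : v ⬝ᵥ (fun i => (y i : R)) ∈ I ^ 2 := by
  have hx : ∑ i, v i • x i = 0 := Subtype.ext (by simpa [dotProduct] using hv)
  have hy : I.toCotangent (∑ i, v i • y i) = 0 := by
    calc I.toCotangent (∑ i, v i • y i) = ∑ i, v i • f (I.toCotangent (x i)) := by simp [hxy]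
      _ = 0 := by rw [← map_zero f, ← map_zero I.toCotangent, ← hx]; simp
  simpa [dotProduct] using (I.toCotangent_eq_zero _).mp hy

end Ideal

theorem statement_19_general
    (K : Type) [Field K] (n : ℕ)
    (I : Ideal (PolyR K n))
    (hgrade : ∃ rs : List (PolyR K n), rs.length = 2 ∧ (∀ r ∈ rs, r ∈ I) ∧
      RingTheory.Sequence.IsRegular (PolyR K n) rs)
    (p q : ℕ) (n1 : Fin p → ℕ) (n2 : Fin q → ℕ)
    (g : Fin p → PolyR K n) (hg : ∀ i, IsHomOfDeg (g i) (n1 i))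
    (hspan : I = Ideal.span (Set.range g))
    (B : Matrix (Fin p) (Fin q) (PolyR K n))
    (hB : ∀ i j, IsHomOfDeg (B i j) ((n2 j : ℤ) - n1 i))
    (hexact : ∀ v : Fin p → PolyR K n,
      (∑ i, v i * g i) = 0 ↔ v ∈ LinearMap.range (Matrix.mulVecLin B))
    (hdeg : ∀ j i, n2 j < 2 * n1 i) :
    Function.Bijective (LinearMap.lsmul (PolyR K n) ↥I) ∧
    ∀ f : I.Cotangent →ₗ[PolyR K n] I.Cotangent,
      (∀ (d : ℕ) (x : ↥I), IsHomOfDeg (x : PolyR K n) d →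
        ∃ y : ↥I, IsHomOfDeg (y : PolyR K n) d ∧ f (I.toCotangent x) = I.toCotangent y) →
      ∃ k : K, ∀ ξ : I.Cotangent, f ξ = (algebraMap K (PolyR K n) k) • ξ := by
  subst hspan
  obtain ⟨rs, hlen, hrsI, hrs⟩ := hgrade
  obtain ⟨r, s, rfl⟩ := List.length_eq_two.mp hlen
  have hbij := Ideal.lsmul_bijective_of_isWeaklyRegular (hrsI r (by simp)) (hrsI s (by simp))
    hrs.toIsWeaklyRegular
  refine ⟨hbij, fun f hf => ?_⟩
  have hg' : ∀ i, (g i).IsHomogeneous (n1 i) := fun i => isHomOfDeg_natCast_iff.mp (hg i)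
  choose y hy hfy using fun i => hf (n1 i) (Ideal.spanGenerator g i) (hg i)
  have hyB : (fun i => (y i : PolyR K n)) ᵥ* B = 0 := by
    funext j
    have hcol : (fun i => B i j) ⬝ᵥ g = 0 :=
      (hexact _).mpr ⟨Pi.single j 1, by ext; simp⟩
    have hsq := Ideal.dotProduct_mem_sq_of_map_toCotangent f hfy hcol
    have hhom : ((fun i => B i j) ⬝ᵥ fun i => (y i : PolyR K n)).IsHomogeneous (n2 j) :=
      isHomOfDeg_natCast_iff.mp <| isHomOfDeg_sum _ fun i _ => by
        simpa using (hB i j).mul (hy i)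
    rw [vecMul, dotProduct_comm]
    exact hhom.eq_zero_of_mem_span_sq hg' (hdeg j) hsq
  obtain ⟨c, hc⟩ := Ideal.exists_eq_mul_of_dotProduct_eq_zero (fun i => (y i).2) (fun v hv => by
      obtain ⟨w, rfl⟩ := (hexact v).mp hv
      rw [dotProduct_comm, mulVecLin_apply, dotProduct_mulVec, hyB,
        zero_dotProduct]) hbij.2
  refine ⟨coeff 0 c, fun ξ => LinearMap.congr_fun (f := f)
    (g := algebraMap K (PolyR K n) (coeff 0 c) • LinearMap.id)
    (Ideal.cotangent_ext_spanGenerator fun i => ?_) ξ⟩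
  have hyc : (y i : PolyR K n) = C (coeff 0 c) * g i := by
    rw [← homogeneousComponent_eq_self (isHomOfDeg_natCast_iff.mp (hy i)), hc i,
      homogeneousComponent_mul_of_isHomogeneous (hg' i)]
  rw [hfy i, algebraMap_eq, LinearMap.smul_apply, LinearMap.id_apply, ← map_smul]
  exact congrArg _ (Subtype.ext (by simp [hyc]))

/-- from Theorem 4.3. Let `I ⊂ R = K[x_0, …, x_n]` be a homogeneous
ideal with `grade(I) ≥ 2`, with a minimal graded free presentation
`⊕_j R(-n_{2j}) → ⊕_i R(-n_{1i}) → I → 0` satisfying `max{n_{2j}} < 2·min{n_{1i}}`.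
Then the natural map `R → Hom_R(I, I)` is an isomorphism, and every `A`-linear,
degree-preserving endomorphism of the conormal module `I/I²` is multiplication by a
scalar of `K` (`₀Hom_A(I/I², I/I²) ≅ K`). -/
theorem statement_19
    (K : Type) [Field K] [IsAlgClosed K] [CharZero K] (n : ℕ)
    (I : Ideal (PolyR K n))
    (hIhom : ∃ S : Set (PolyR K n),
      (∀ p ∈ S, ∃ d : ℕ, IsHomOfDeg p d) ∧ I = Ideal.span S)
    (hgrade : ∃ rs : List (PolyR K n), rs.length = 2 ∧ (∀ r ∈ rs, r ∈ I) ∧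
      RingTheory.Sequence.IsRegular (PolyR K n) rs)
    (p q : ℕ) (n1 : Fin p → ℕ) (n2 : Fin q → ℕ)
    (g : Fin p → PolyR K n) (hg : ∀ i, IsHomOfDeg (g i) (n1 i))
    (hspan : I = Ideal.span (Set.range g))
    (B : Matrix (Fin p) (Fin q) (PolyR K n))
    (hB : ∀ i j, IsHomOfDeg (B i j) ((n2 j : ℤ) - n1 i))
    (hmin : ∀ i j, MvPolynomial.coeff 0 (B i j) = 0)
    (hexact : ∀ v : Fin p → PolyR K n,
      (∑ i, v i * g i) = 0 ↔ v ∈ LinearMap.range (Matrix.mulVecLin B))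
    (hdeg : ∀ j i, n2 j < 2 * n1 i) :
    Function.Bijective (LinearMap.lsmul (PolyR K n) ↥I) ∧
    ∀ f : I.Cotangent →ₗ[PolyR K n] I.Cotangent,
      (∀ (d : ℕ) (x : ↥I), IsHomOfDeg (x : PolyR K n) d →
        ∃ y : ↥I, IsHomOfDeg (y : PolyR K n) d ∧ f (I.toCotangent x) = I.toCotangent y) →
      ∃ k : K, ∀ ξ : I.Cotangent, f ξ = (algebraMap K (PolyR K n) k) • ξ :=
  statement_19_general K n I hgrade p q n1 n2 g hg hspan B hB hexact hdeg
end
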